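/- Let G = (V, E) be a finite connected simple graph with the shortest-path metric δ, and let P ⊆ V with |P| ≥ 2 and P ≠ V. Then the gap ratio of P satisfies GR_P ≥ 2/3; moreover GR_P = 2/3 holds only when R_P = 1 and r_P = 3/2 (equivalently, the minimum pairwise graph distance in P equals 3). -/

import Mathlib

/-!
Let `d` be the least distance between two points `p ≠ q` of `P` and `R` the maximum gap.
The vertex `m` reached after `⌊d/2⌋` steps along a geodesic from `p` to `q` is at distance at
least `⌊d/2⌋` from every point of `P`: from `p` because `δ(m, q) ≤ ⌈d/2⌉`, from any other point
because `δ(p, m) ≤ ⌊d/2⌋` and `d` is minimal. Hence `d ≤ 2R + 1`; since `P ≠ V` also `R ≥ 1`,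
so `R / (d/2) ≥ 2R / (2R + 1) ≥ 2/3`, with equality only for `R = 1` and `d = 3`.
-/

/-- Minimum gap of a vertex set `P` with respect to the shortest-path metric of `G`:
half the least pairwise graph distance. -/
noncomputable def graphMinGap {V : Type*} (G : SimpleGraph V) (P : Set V) : ℝ :=
  sInf {d : ℝ | ∃ p ∈ P, ∃ q ∈ P, p ≠ q ∧ d = (G.dist p q : ℝ)} / 2

/-- Maximum gap of a vertex set `P` with respect to the shortest-path metric of `G`:
the largest graph distance from a vertex to the set `P`. -/
noncomputable def graphMaxGap {V : Type*} (G : SimpleGraph V) (P : Set V) : ℝ :=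
  sSup (Set.range fun v : V => sInf {d : ℝ | ∃ p ∈ P, d = (G.dist v p : ℝ)})

/-- Gap ratio of a vertex set `P` in the shortest-path metric of `G`. -/
noncomputable def graphGapRatio {V : Type*} (G : SimpleGraph V) (P : Set V) : ℝ :=
  graphMaxGap G P / graphMinGap G P

section GapRatio

variable {V : Type*} {G : SimpleGraph V} {P : Set V}

lemma exists_graphMinGap_eq (hP : P.Nontrivial) :
    ∃ p ∈ P, ∃ q ∈ P, p ≠ q ∧ graphMinGap G P = G.dist p q / 2 ∧
      ∀ p' ∈ P, ∀ q' ∈ P, p' ≠ q' → G.dist p q ≤ G.dist p' q' := by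
  let pairs : Set (V × V) := {x | x.1 ∈ P ∧ x.2 ∈ P ∧ x.1 ≠ x.2}
  let f (x : V × V) : ℕ := G.dist x.1 x.2
  obtain ⟨a, ha, b, hb, hab⟩ := hP
  have hpairs : pairs.Nonempty := ⟨(a, b), show (a, b) ∈ pairs from ⟨ha, hb, hab⟩⟩
  set x := Function.argminOn f pairs hpairs
  obtain ⟨hp, hq, hpq⟩ : x ∈ pairs := Function.argminOn_mem _ _ _
  have hmin : ∀ p' ∈ P, ∀ q' ∈ P, p' ≠ q' → G.dist x.1 x.2 ≤ G.dist p' q' :=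
    fun p' hp' q' hq' hpq' =>
      Function.argminOn_le f pairs (show (p', q') ∈ pairs from ⟨hp', hq', hpq'⟩)
  refine ⟨x.1, hp, x.2, hq, hpq, ?_, hmin⟩
  have hleast : IsLeast {d : ℝ | ∃ p ∈ P, ∃ q ∈ P, p ≠ q ∧ d = (G.dist p q : ℝ)}
      (G.dist x.1 x.2) := by
    refine ⟨⟨x.1, hp, x.2, hq, hpq, rfl⟩, ?_⟩
    rintro _ ⟨p', hp', q', hq', hpq', rfl⟩
    exact_mod_cast hmin p' hp' q' hq' hpq'
  rw [graphMinGap, hleast.csInf_eq]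

lemma natCast_le_graphMaxGap [Finite V] {v : V} {k : ℕ} (hP : P.Nonempty)
    (hk : ∀ p ∈ P, k ≤ G.dist v p) : (k : ℝ) ≤ graphMaxGap G P := by
  obtain ⟨p, hp⟩ := hP
  calc (k : ℝ) ≤ sInf {d : ℝ | ∃ p ∈ P, d = (G.dist v p : ℝ)} := by
        refine le_csInf ⟨_, p, hp, rfl⟩ ?_
        rintro _ ⟨p', hp', rfl⟩
        exact_mod_cast hk p' hp'
    _ ≤ graphMaxGap G P := le_csSup (Set.finite_range _).bddAbove ⟨v, rfl⟩

lemma one_le_graphMaxGap [Finite V] (hG : G.Connected) (hP : P.Nonempty)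
    (hne : P ≠ Set.univ) : 1 ≤ graphMaxGap G P := by
  obtain ⟨v, hv⟩ := (Set.ne_univ_iff_exists_notMem P).mp hne
  exact_mod_cast natCast_le_graphMaxGap (v := v) hP fun p hp =>
    hG.pos_dist_of_ne fun h => hv (h ▸ hp)

lemma dist_le_two_mul_graphMaxGap_add_one [Finite V] (hG : G.Connected) {p q : V} (hp : p ∈ P)
    (hq : ∀ p' ∈ P, p' ≠ p → G.dist p q ≤ G.dist p p') :
    (G.dist p q : ℝ) ≤ 2 * graphMaxGap G P + 1 := by
  set d := G.dist p q
  obtain ⟨w, hw⟩ := hG.exists_walk_length_eq_dist p q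
  set m := w.getVert (d / 2)
  have hpm : G.dist p m ≤ d / 2 :=
    (SimpleGraph.dist_le (w.take (d / 2))).trans (by simp [SimpleGraph.Walk.take_length])
  have hmq : G.dist m q ≤ d - d / 2 :=
    (SimpleGraph.dist_le (w.drop (d / 2))).trans (by simp [SimpleGraph.Walk.drop_length, hw, d])
  have hfar : ∀ p' ∈ P, d / 2 ≤ G.dist m p' := by
    intro p' hp'
    rcases eq_or_ne p' p with rfl | hp'p
    · have := hG.dist_triangle (u := p') (v := m) (w := q)
      rw [SimpleGraph.dist_comm]
      omega
    · have := hq p' hp' hp'p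
      have := hG.dist_triangle (u := p) (v := m) (w := p')
      omega
  have hR := natCast_le_graphMaxGap ⟨p, hp⟩ hfar
  have hd : d ≤ 2 * (d / 2) + 1 := by omega
  calc (d : ℝ) ≤ 2 * ((d / 2 : ℕ) : ℝ) + 1 := by exact_mod_cast hd
    _ ≤ 2 * graphMaxGap G P + 1 := by linarith

end GapRatio

/-- In a finite connected graph with the shortest-path metric, every proper vertex
subset with at least two vertices has gap ratio at least `2/3`, and the value `2/3`
is attained only with maximum gap `1` and minimum gap `3/2`. -/
theorem stmt4 {V : Type*} [Fintype V] (G : SimpleGraph V) (hG : G.Connected)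
    (P : Set V) (hcard : 2 ≤ P.ncard) (hne : P ≠ Set.univ) :
    2/3 ≤ graphGapRatio G P ∧
    (graphGapRatio G P = 2/3 → graphMaxGap G P = 1 ∧ graphMinGap G P = 3/2) := by
  have hP : P.Nontrivial := (Set.one_lt_ncard_iff_nontrivial_and_finite.mp hcard).1
  obtain ⟨p, hp, q, -, hpq, hr, hmin⟩ := exists_graphMinGap_eq (G := G) hP
  have hR := one_le_graphMaxGap hG hP.nonempty hne
  have hdR := dist_le_two_mul_graphMaxGap_add_one hG hp fun p' hp' h => hmin p hp p' hp' h.symm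
  have hd : (0 : ℝ) < G.dist p q / 2 := by
    have : 0 < G.dist p q := hG.pos_dist_of_ne hpq
    positivity
  rw [graphGapRatio, hr, le_div_iff₀ hd]
  refine ⟨by linarith, fun heq => ?_⟩
  rw [div_eq_iff hd.ne'] at heq
  constructor <;> linarith
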